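/- If φ avoids Ω₁, then each f_i (1 ≤ i ≤ p−1) is a derivation of F_φ, and every derivation D of F_φ can be written uniquely as D = ad(x) + λ_1 f_1 + … + λ_{p−1} f_{p−1} with x ∈ F_φ and λ_1, …, λ_{p−1} ∈ ℂ, where ad(x) denotes the inner derivation y ↦ [x,y]. -/

import Mathlib

/-!
`ad X₂` is diagonal in the basis `X₁, …, X_{2p}` with eigenvalues `1, 0, -φ_k, 1 + φ_k`, and
avoiding `Ω₁` makes these pairwise distinct. Subtracting a suitable inner derivation from a
derivation `D` makes `D X₂` a multiple of `X₂`; comparing the derivation rule on `[X₂, X_j]` with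
the eigenvalue equation then shows that this multiple vanishes and that the remainder commutes
with `ad X₂`, hence is diagonal. A diagonal derivation `diag(d)` has `d₂ = 0` and
`d_{2k+1} + d_{2k+2} = d₁`, which is exactly what it takes to be `d₁ • ad X₂ + ∑ λ_k f_k`.
Conversely, if `ad x + ∑ λ_k f_k = 0`, evaluating at `X₂` puts `x` in the kernel `ℂ X₂` of
`ad X₂`, and the diagonal entries at `X₁` and `X_{2k+1}` give `x = 0` and `λ_k = 0`.
-/

open scoped BigOperators

noncomputable section

/-- The underlying space ℂ^{2p} of the Lie algebra `F_φ`. -/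
abbrev V (p : ℕ) : Type := Fin (2*p) → ℂ

/-- The space of bilinear maps ℂ^{2p} × ℂ^{2p} → ℂ^{2p}. -/
abbrev Bil (p : ℕ) : Type := V p →ₗ[ℂ] V p →ₗ[ℂ] V p

/-- The basis vector `X j` (1-indexed, j = 1, …, 2p). -/
def X (p j : ℕ) : V p := fun i => if (i : ℕ) + 1 = j then 1 else 0

/-- The coordinate functional dual to `X j` (1-indexed). -/
def coordL (p j : ℕ) : V p →ₗ[ℂ] ℂ :=
  if h : j - 1 < 2*p then LinearMap.proj (⟨j - 1, h⟩ : Fin (2*p)) else 0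

/-- The elementary alternating bilinear map `(x,y) ↦ (x_a y_b − x_b y_a) • v`
(indices 1-based). -/
def elem (p a b : ℕ) (v : V p) : Bil p :=
  (coordL p a).smulRight ((coordL p b).smulRight v)
    - (coordL p b).smulRight ((coordL p a).smulRight v)

/-- The Lie bracket of the frobeniusian model algebra `F_φ`:
`[X_1,X_2] = −X_1`, `[X_{2k+1},X_{2k+2}] = −X_1`, `[X_2,X_{2k+1}] = −φ_k X_{2k+1}`,
`[X_2,X_{2k+2}] = (1+φ_k) X_{2k+2}` for `1 ≤ k ≤ p−1`. -/
def mu (p : ℕ) (φ : ℕ → ℂ) : Bil p :=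
  elem p 1 2 (-(X p 1)) +
    ∑ k ∈ Finset.Icc 1 (p-1),
      (elem p (2*k+1) (2*k+2) (-(X p 1)) + elem p 2 (2*k+1) (-(φ k) • X p (2*k+1))
        + elem p 2 (2*k+2) ((1 + φ k) • X p (2*k+2)))

/-- `φ` avoids the set `Ω₁`. -/
def AvoidsOmega1 (p : ℕ) (φ : ℕ → ℂ) : Prop :=
  ∀ i j : ℕ, 1 ≤ i → i ≤ p - 1 → 1 ≤ j → j ≤ p - 1 →
    1 + φ i + φ j ≠ 0 ∧ 2 + φ i + φ j ≠ 0 ∧ (i ≠ j → φ i ≠ φ j) ∧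
      φ i ≠ 0 ∧ φ i ≠ -1 ∧ 2 * φ i + 1 ≠ 0

/-- `φ` avoids the set `Ω = Ω₁ ∪ Ω₂`. -/
def AvoidsOmega (p : ℕ) (φ : ℕ → ℂ) : Prop :=
  AvoidsOmega1 p φ ∧
    ∀ i j : ℕ, 1 ≤ i → i ≤ p - 1 → 1 ≤ j → j ≤ p - 1 →
      (i ≠ j → 1 + φ i - φ j ≠ 0) ∧ φ i + φ j ≠ 0 ∧ 2 + φ i ≠ 0 ∧ 1 - φ i ≠ 0 ∧
        1 + 2*φ i - φ j ≠ 0 ∧ 1 + 2*φ i + φ j ≠ 0 ∧ 2*φ i - φ j ≠ 0 ∧ 2 + 2*φ i + φ j ≠ 0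

/-- The space of derivations of a bilinear bracket `B` on `ℂ^{2p}`. -/
def derSub (p : ℕ) (B : Bil p) : Submodule ℂ (V p →ₗ[ℂ] V p) where
  carrier := {D | ∀ x y, D (B x y) = B (D x) y + B x (D y)}
  add_mem' := by
    intro D E hD hE x y
    simp only [LinearMap.add_apply, hD x y, hE x y, map_add, LinearMap.add_apply]
    abel
  zero_mem' := by intro x y; simp
  smul_mem' := by
    intro c D hD x y
    simp only [LinearMap.smul_apply, hD x y, map_smul, LinearMap.map_smul₂,
      LinearMap.smul_apply, smul_add]

/-- The grading subspaces: `g_0 = ℂ X_2`, `g_1 = ⟨X_3,…,X_{2p}⟩`, `g_2 = ℂ X_1`,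
and `g_m = 0` otherwise. -/
def gr (p : ℕ) : ℤ → Submodule ℂ (V p) := fun m =>
  if m = 0 then Submodule.span ℂ {X p 2}
  else if m = 1 then Submodule.span ℂ {v | ∃ j, 3 ≤ j ∧ j ≤ 2*p ∧ v = X p j}
  else if m = 2 then Submodule.span ℂ {X p 1}
  else ⊥

/-- The space of 2-cocycles of `F_φ` with coefficients in the adjoint module
(2-cochains are alternating bilinear maps). -/
def Z2 (p : ℕ) (φ : ℕ → ℂ) : Submodule ℂ (Bil p) where
  carrier := {ψ | (∀ x, ψ x x = 0) ∧
    ∀ x y z, mu p φ x (ψ y z) - mu p φ y (ψ x z) + mu p φ z (ψ x y)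
      - ψ (mu p φ x y) z + ψ (mu p φ x z) y - ψ (mu p φ y z) x = 0}
  add_mem' := by
    rintro ψ₁ ψ₂ ⟨h₁a, h₁c⟩ ⟨h₂a, h₂c⟩
    constructor
    · intro x; simp [h₁a x, h₂a x]
    · intro x y z
      have e₁ := h₁c x y z
      have e₂ := h₂c x y z
      simp only [LinearMap.add_apply, map_add]
      rw [← sub_eq_zero] at *
      simp only [sub_zero] at *
      linear_combination (norm := module) e₁ + e₂
  zero_mem' := by
    constructor
    · intro x; simp
    · intro x y z; simp
  smul_mem' := by
    rintro c ψ ⟨ha, hc⟩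
    constructor
    · intro x; simp [ha x]
    · intro x y z
      have e := hc x y z
      simp only [LinearMap.smul_apply, map_smul]
      linear_combination (norm := module) c • e

/-- The space of 2-coboundaries of `F_φ` with coefficients in the adjoint module. -/
def B2 (p : ℕ) (φ : ℕ → ℂ) : Submodule ℂ (Bil p) where
  carrier := {ψ | ∃ f : V p →ₗ[ℂ] V p,
    ∀ x y, ψ x y = mu p φ x (f y) - mu p φ y (f x) - f (mu p φ x y)}
  add_mem' := by
    rintro ψ₁ ψ₂ ⟨f₁, h₁⟩ ⟨f₂, h₂⟩
    refine ⟨f₁ + f₂, fun x y => ?_⟩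
    simp only [LinearMap.add_apply, h₁ x y, h₂ x y, map_add]
    abel
  zero_mem' := ⟨0, by intro x y; simp⟩
  smul_mem' := by
    rintro c ψ ⟨f, h⟩
    refine ⟨c • f, fun x y => ?_⟩
    simp only [LinearMap.smul_apply, h x y, map_smul, smul_sub]

/-- The 2-cochains of degree `k` with respect to the grading `gr`. -/
def degSub (p : ℕ) (k : ℤ) : Submodule ℂ (Bil p) where
  carrier := {ψ | ∀ (a b : ℤ), ∀ x ∈ gr p a, ∀ y ∈ gr p b, ψ x y ∈ gr p (a + b + k)}
  add_mem' := by
    intro ψ₁ ψ₂ h₁ h₂ a b x hx y hy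
    simpa using Submodule.add_mem _ (h₁ a b x hx y hy) (h₂ a b x hx y hy)
  zero_mem' := by intro a b x hx y hy; simp
  smul_mem' := by
    intro c ψ h a b x hx y hy
    simpa using Submodule.smul_mem _ c (h a b x hx y hy)

attribute [local instance] LieRing.ofAssociativeRing

/-- The derivations of `F_φ` as a Lie subalgebra of `End(ℂ^{2p})`. -/
def derLie (p : ℕ) (φ : ℕ → ℂ) : LieSubalgebra ℂ (Module.End ℂ (V p)) :=
  { derSub p (mu p φ) with
    lie_mem' := by
      intro D E hD hE
      have hD' : ∀ x y, D (mu p φ x y) = mu p φ (D x) y + mu p φ x (D y) := hD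
      have hE' : ∀ x y, E (mu p φ x y) = mu p φ (E x) y + mu p φ x (E y) := hE
      intro x y
      simp only [Ring.lie_def, LinearMap.sub_apply, Module.End.mul_apply]
      rw [hE' x y, hD' x y, map_add, map_add, hD' (E x) y, hD' x (E y),
        hE' (D x) y, hE' x (D y)]
      simp only [map_sub, LinearMap.sub_apply]
      abel }

/-- The derivation `f_i` of `F_φ` : `f_i(X_{2i+1}) = X_{2i+1}`, `f_i(X_{2i+2}) = −X_{2i+2}`. -/
def fDer (p i : ℕ) : V p →ₗ[ℂ] V p :=
  (coordL p (2*i+1)).smulRight (X p (2*i+1)) - (coordL p (2*i+2)).smulRight (X p (2*i+2))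

/-- The 2-cocycle `ψ_k = ψ^{2k+1}_{2,2k+1}` :
`(X_2,X_{2k+1}) ↦ X_{2k+1}`, `(X_2,X_{2k+2}) ↦ −X_{2k+2}`. -/
def psiK (p k : ℕ) : Bil p :=
  elem p 2 (2*k+1) (X p (2*k+1)) - elem p 2 (2*k+2) (X p (2*k+2))

/-- The 2-cocycle `ψ^2_{12}` spanning `Z²_{−2}`. -/
def psiM2 (p : ℕ) (φ : ℕ → ℂ) : Bil p :=
  elem p 1 2 (X p 2) +
    ∑ k ∈ Finset.Icc 1 (p-1),
      (elem p (2*k+1) (2*k+2) (X p 2) + elem p 1 (2*k+1) (-(φ k) • X p (2*k+1))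
        + elem p 1 (2*k+2) ((1 + φ k) • X p (2*k+2)))

/-- The 2-cocycle `ψ^1_{2,j}` : `(X_2,X_j) ↦ X_1`. -/
def psiTop (p j : ℕ) : Bil p := elem p 2 j (X p 1)

/-! ### Plain-function versions of the relevant spaces.
We realise spaces of (multi)linear maps as submodules of plain function spaces,
the (bi)linearity being part of the defining conditions. -/

/-- `ψ : ℂ^{2p} × ℂ^{2p} → ℂ^{2p}` is bilinear. -/
def IsBil (p : ℕ) (ψ : V p → V p → V p) : Prop :=
  (∀ x x' y, ψ (x + x') y = ψ x y + ψ x' y) ∧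
  (∀ (c : ℂ) (x y), ψ (c • x) y = c • ψ x y) ∧
  (∀ x y y', ψ x (y + y') = ψ x y + ψ x y') ∧
  (∀ (c : ℂ) (x y), ψ x (c • y) = c • ψ x y)

/-- The space of derivations of a bilinear bracket `B` on `ℂ^{2p}`, realised inside
the space of all maps `ℂ^{2p} → ℂ^{2p}` (linearity is part of the conditions). -/
def derF (p : ℕ) (B : Bil p) : Submodule ℂ (V p → V p) where
  carrier := {D | (∀ x y, D (x + y) = D x + D y) ∧ (∀ (c : ℂ) (x), D (c • x) = c • D x) ∧
    ∀ x y, D (B x y) = B (D x) y + B x (D y)}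
  add_mem' := by
    rintro D E ⟨hDa, hDs, hDd⟩ ⟨hEa, hEs, hEd⟩
    refine ⟨fun x y => ?_, fun c x => ?_, fun x y => ?_⟩
    · simp only [Pi.add_apply, hDa, hEa]; abel
    · simp only [Pi.add_apply, hDs, hEs, smul_add]
    · simp only [Pi.add_apply, hDd x y, hEd x y, map_add, LinearMap.add_apply]; abel
  zero_mem' := by
    refine ⟨fun x y => ?_, fun c x => ?_, fun x y => ?_⟩ <;> simp
  smul_mem' := by
    rintro c D ⟨hDa, hDs, hDd⟩
    refine ⟨fun x y => ?_, fun c' x => ?_, fun x y => ?_⟩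
    · simp only [Pi.smul_apply, hDa, smul_add]
    · simp only [Pi.smul_apply, hDs, smul_comm c c']
    · simp only [Pi.smul_apply, hDd x y, map_smul, LinearMap.smul_apply, smul_add]

/-- The space of inner derivations `ad(v) = B(v,·)` of a bilinear bracket `B`. -/
def innerF (p : ℕ) (B : Bil p) : Submodule ℂ (V p → V p) where
  carrier := {D | ∃ v, D = fun y => B v y}
  add_mem' := by
    rintro D E ⟨v, rfl⟩ ⟨w, rfl⟩
    exact ⟨v + w, by funext y; simp [map_add]⟩
  zero_mem' := ⟨0, by funext y; simp⟩
  smul_mem' := by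
    rintro c D ⟨v, rfl⟩
    exact ⟨c • v, by funext y; simp [map_smul]⟩

/-- The space of 2-cocycles of `F_φ` with coefficients in the adjoint module;
2-cochains are alternating bilinear maps `ℂ^{2p} × ℂ^{2p} → ℂ^{2p}`. -/
def Z2F (p : ℕ) (φ : ℕ → ℂ) : Submodule ℂ (V p → V p → V p) where
  carrier := {ψ | IsBil p ψ ∧ (∀ x, ψ x x = 0) ∧
    ∀ x y z, mu p φ x (ψ y z) - mu p φ y (ψ x z) + mu p φ z (ψ x y)
      - ψ (mu p φ x y) z + ψ (mu p φ x z) y - ψ (mu p φ y z) x = 0}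
  add_mem' := by
    rintro ψ₁ ψ₂ ⟨⟨hb₁, hb₂, hb₃, hb₄⟩, ha, hc⟩ ⟨⟨hb₁', hb₂', hb₃', hb₄'⟩, ha', hc'⟩
    refine ⟨⟨fun x x' y => ?_, fun c x y => ?_, fun x y y' => ?_, fun c x y => ?_⟩,
      fun x => ?_, fun x y z => ?_⟩
    · simp only [Pi.add_apply, hb₁, hb₁']; abel
    · simp only [Pi.add_apply, hb₂, hb₂', smul_add]
    · simp only [Pi.add_apply, hb₃, hb₃']; abel
    · simp only [Pi.add_apply, hb₄, hb₄', smul_add]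
    · simp only [Pi.add_apply, ha x, ha' x]; abel
    · have e := hc x y z
      have e' := hc' x y z
      simp only [Pi.add_apply, map_add]
      linear_combination (norm := module) e + e'
  zero_mem' := by
    refine ⟨⟨fun x x' y => ?_, fun c x y => ?_, fun x y y' => ?_, fun c x y => ?_⟩,
      fun x => ?_, fun x y z => ?_⟩ <;> simp
  smul_mem' := by
    rintro c ψ ⟨⟨hb₁, hb₂, hb₃, hb₄⟩, ha, hc⟩
    refine ⟨⟨fun x x' y => ?_, fun c' x y => ?_, fun x y y' => ?_, fun c' x y => ?_⟩,
      fun x => ?_, fun x y z => ?_⟩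
    · simp only [Pi.smul_apply, hb₁, smul_add]
    · simp only [Pi.smul_apply, hb₂, smul_comm c c']
    · simp only [Pi.smul_apply, hb₃, smul_add]
    · simp only [Pi.smul_apply, hb₄, smul_comm c c']
    · simp only [Pi.smul_apply, ha x, smul_zero]
    · have e := hc x y z
      simp only [Pi.smul_apply, map_smul]
      linear_combination (norm := module) c • e

/-- The space of 2-coboundaries of `F_φ` with coefficients in the adjoint module. -/
def B2F (p : ℕ) (φ : ℕ → ℂ) : Submodule ℂ (V p → V p → V p) where
  carrier := {ψ | ∃ f : V p →ₗ[ℂ] V p,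
    ∀ x y, ψ x y = mu p φ x (f y) - mu p φ y (f x) - f (mu p φ x y)}
  add_mem' := by
    rintro ψ₁ ψ₂ ⟨f₁, h₁⟩ ⟨f₂, h₂⟩
    refine ⟨f₁ + f₂, fun x y => ?_⟩
    simp only [Pi.add_apply, h₁ x y, h₂ x y, map_add, LinearMap.add_apply]
    abel
  zero_mem' := ⟨0, by intro x y; simp⟩
  smul_mem' := by
    rintro c ψ ⟨f, h⟩
    refine ⟨c • f, fun x y => ?_⟩
    simp only [Pi.smul_apply, h x y, map_smul, LinearMap.smul_apply, smul_sub]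

/-- The 2-cochains of degree `k` with respect to the grading `gr`. -/
def degF (p : ℕ) (k : ℤ) : Submodule ℂ (V p → V p → V p) where
  carrier := {ψ | ∀ (a b : ℤ), ∀ x ∈ gr p a, ∀ y ∈ gr p b, ψ x y ∈ gr p (a + b + k)}
  add_mem' := by
    intro ψ₁ ψ₂ h₁ h₂ a b x hx y hy
    simpa using Submodule.add_mem _ (h₁ a b x hx y hy) (h₂ a b x hx y hy)
  zero_mem' := by intro a b x hx y hy; simp
  smul_mem' := by
    intro c ψ h a b x hx y hy
    simpa using Submodule.smul_mem _ c (h a b x hx y hy)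

/-- A bilinear map, viewed as a plain function. -/
def toF (p : ℕ) (B : Bil p) : V p → V p → V p := fun x y => B x y

open Matrix

section DiagonalAd

variable {K ι : Type*} [Field K] [DecidableEq ι]

theorem toLin'_diagonal_apply [Fintype ι] (δ v : ι → K) (i : ι) :
    toLin' (diagonal δ) v i = δ i * v i := by
  rw [toLin'_apply, mulVec_diagonal]

theorem eq_single_of_apply_eq_smul {f : (ι → K) → ι → K} {ev : ι → K}
    (hf : ∀ v i, f v i = ev i * v i) (hev : Function.Injective ev) {v : ι → K} {j : ι}
    (hv : f v = ev j • v) : v = Pi.single j (v j) := by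
  funext i
  by_cases hij : i = j
  · subst hij; simp
  · have h : (ev i - ev j) * v i = 0 := by
      have := congr_fun hv i
      rw [hf, Pi.smul_apply, smul_eq_mul] at this
      linear_combination this
    rw [Pi.single_eq_of_ne hij]
    exact (mul_eq_zero.mp h).resolve_left (sub_ne_zero.mpr (hev.ne hij))

theorem exists_add_apply_eq_single {f : (ι → K) → ι → K} {ev : ι → K}
    (hf : ∀ v i, f v i = ev i * v i) (hev : Function.Injective ev) {i₀ : ι} (hi₀ : ev i₀ = 0)
    (d : ι → K) : ∃ x, d + f x = Pi.single i₀ (d i₀) := by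
  refine ⟨fun j => -(d j / ev j), funext fun j => ?_⟩
  rw [Pi.add_apply, hf]
  by_cases hj : j = i₀
  · subst hj; simp [hi₀]
  · have : ev j ≠ 0 := hi₀ ▸ hev.ne hj
    rw [Pi.single_eq_of_ne hj]
    field_simp
    ring

theorem derivation_eq_diagonal_of_apply_eq_smul [Fintype ι]
    (B : (ι → K) →ₗ[K] (ι → K) →ₗ[K] ι → K)
    {h : ι → K} {ev : ι → K} (hdiag : ∀ v i, B h v i = ev i * v i)
    (hev : Function.Injective ev) {j₁ : ι} (hj₁ : ev j₁ ≠ 0)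
    (E : (ι → K) →ₗ[K] ι → K) (hE : ∀ x y, E (B x y) = B (E x) y + B x (E y))
    {c : K} (hc : E h = c • h) :
    c = 0 ∧ E = toLin' (diagonal fun j => E (Pi.single j 1) j) := by
  have hBe : ∀ j, B h (Pi.single j 1) = ev j • Pi.single j 1 := fun j => by
    funext i; rw [hdiag]; by_cases hij : i = j <;> simp [hij]
  -- the derivation rule on `(h, e_j)`; its `j`-th coordinate forces `c * ev j = 0`
  have key : ∀ j, B h (E (Pi.single j 1)) =
      ev j • E (Pi.single j 1) - (c * ev j) • Pi.single j 1 := fun j => by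
    have := hE h (Pi.single j 1)
    rw [hBe, map_smul, hc, map_smul, LinearMap.smul_apply, hBe] at this
    rw [this, smul_smul]
    abel
  have hc0 : c = 0 := by
    have := congr_fun (key j₁) j₁
    simp only [hdiag, Pi.sub_apply, Pi.smul_apply, smul_eq_mul, Pi.single_eq_same] at this
    exact (mul_eq_zero.mp (by linear_combination this)).resolve_right hj₁
  refine ⟨hc0, LinearMap.pi_ext' fun j => LinearMap.ext_ring ?_⟩
  have hEj := eq_single_of_apply_eq_smul hdiag hev (by simpa [hc0] using key j)
  simp only [LinearMap.coe_comp, Function.comp_apply, LinearMap.coe_single]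
  conv_lhs => rw [hEj]
  funext i
  rw [toLin'_diagonal_apply]
  by_cases hij : i = j
  · subst hij; simp
  · simp [Pi.single_eq_of_ne hij]

theorem exists_eq_ad_add_diagonal [Fintype ι] (B : (ι → K) →ₗ[K] (ι → K) →ₗ[K] ι → K)
    (hanti : ∀ x y, B x y = -B y x) (hjac : ∀ x y z, B x (B y z) = B (B x y) z + B y (B x z))
    {ev : ι → K} {i₀ j₁ : ι} (hdiag : ∀ v i, B (Pi.single i₀ 1) v i = ev i * v i)
    (hev : Function.Injective ev) (hi₀ : ev i₀ = 0) (hj₁ : ev j₁ ≠ 0)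
    (D : (ι → K) →ₗ[K] ι → K) (hD : ∀ x y, D (B x y) = B (D x) y + B x (D y)) :
    ∃ x δ, δ i₀ = 0 ∧ D = B x + toLin' (diagonal δ) := by
  -- `x` is chosen so that `D - B x` maps `e_{i₀}` into the kernel `K e_{i₀}` of `B e_{i₀}`
  obtain ⟨x, hx⟩ := exists_add_apply_eq_single hdiag hev hi₀ (D (Pi.single i₀ 1))
  set E := D - B x
  have hE : ∀ y z, E (B y z) = B (E y) z + B y (E z) := fun y z => by
    simp only [E, LinearMap.sub_apply, map_sub]
    rw [hD, hjac]
    abel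
  have hEh : E (Pi.single i₀ 1) = D (Pi.single i₀ 1) i₀ • Pi.single i₀ 1 := by
    rw [LinearMap.sub_apply, hanti, sub_neg_eq_add, hx, ← Pi.single_smul', smul_eq_mul, mul_one]
  obtain ⟨hc, hEdiag⟩ := derivation_eq_diagonal_of_apply_eq_smul B hdiag hev hj₁ E hE hEh
  refine ⟨x, _, ?_, by rw [← hEdiag, add_sub_cancel]⟩
  rw [hEh, hc, zero_smul, Pi.zero_apply]

end DiagonalAd

section Coordinates

variable {p : ℕ}

theorem coordL_apply {m : ℕ} (h : m - 1 < 2 * p) (v : V p) : coordL p m v = v ⟨m - 1, h⟩ := by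
  simp [coordL, h]

theorem coordL_succ (t : Fin (2 * p)) (v : V p) : coordL p (t + 1) v = v t :=
  coordL_apply (by omega) v

theorem coordL_X {m : ℕ} (h1 : 1 ≤ m) (h2 : m ≤ 2 * p) (b : ℕ) :
    coordL p m (X p b) = if m = b then 1 else 0 := by
  rw [coordL_apply (by omega)]
  simp only [X, Nat.sub_add_cancel h1]

theorem ext_coordL {v w : V p} (h : ∀ m, 1 ≤ m → m ≤ 2 * p → coordL p m v = coordL p m w) :
    v = w := by
  funext t
  simpa only [coordL_succ] using h (t + 1) (by omega) (by omega)

theorem X_eq_single {b : ℕ} (h1 : 1 ≤ b) (h2 : b ≤ 2 * p) :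
    X p b = Pi.single (⟨b - 1, by omega⟩ : Fin (2 * p)) 1 := by
  funext t
  simp only [X, Pi.single_apply, Fin.ext_iff]
  exact if_congr ⟨fun h => by omega, fun h => by omega⟩ rfl rfl

theorem coordL_diagonal (δ v : V p) (m : ℕ) :
    coordL p m (toLin' (diagonal δ) v) = coordL p m δ * coordL p m v := by
  by_cases h : m - 1 < 2 * p
  · simp only [coordL_apply h, toLin'_diagonal_apply]
  · simp [coordL, h]

theorem index_cases {m : ℕ} (h1 : 1 ≤ m) (h2 : m ≤ 2 * p) :
    m = 1 ∨ m = 2 ∨ (∃ k, 1 ≤ k ∧ k ≤ p - 1 ∧ m = 2 * k + 1) ∨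
      (∃ k, 1 ≤ k ∧ k ≤ p - 1 ∧ m = 2 * k + 2) := by
  rcases Nat.even_or_odd' m with ⟨k, rfl | rfl⟩
  · rcases Nat.lt_or_ge k 2 with hk | hk
    · right; left; omega
    · right; right; right; exact ⟨k - 1, by omega, by omega, by omega⟩
  · rcases Nat.lt_or_ge k 1 with hk | hk
    · left; omega
    · right; right; left; exact ⟨k, hk, by omega, rfl⟩

theorem toLin'_diagonal_X (b : ℕ) (δ : V p) :
    toLin' (diagonal δ) (X p b) = coordL p b δ • X p b := by
  refine ext_coordL fun m hm1 hm2 => ?_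
  rw [coordL_diagonal, map_smul, smul_eq_mul, coordL_X hm1 hm2]
  by_cases hmb : m = b
  · rw [hmb]
  · simp [hmb]

end Coordinates

section Bracket

variable {p : ℕ} (φ : ℕ → ℂ)

theorem elem_apply (a b : ℕ) (v x y : V p) :
    elem p a b v x y = (coordL p a x * coordL p b y - coordL p b x * coordL p a y) • v := by
  simp [elem, sub_smul, mul_smul]

theorem coordL_mu {m : ℕ} (h1 : 1 ≤ m) (h2 : m ≤ 2 * p) (x y : V p) :
    coordL p m (mu p φ x y) =
      -((coordL p 1 x * coordL p 2 y - coordL p 2 x * coordL p 1 y) * if m = 1 then 1 else 0) +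
      ∑ k ∈ Finset.Icc 1 (p - 1),
        (-((coordL p (2*k+1) x * coordL p (2*k+2) y - coordL p (2*k+2) x * coordL p (2*k+1) y)
            * if m = 1 then 1 else 0)
          - φ k * (coordL p 2 x * coordL p (2*k+1) y - coordL p (2*k+1) x * coordL p 2 y)
            * (if m = 2 * k + 1 then 1 else 0)
          + (1 + φ k) * (coordL p 2 x * coordL p (2*k+2) y - coordL p (2*k+2) x * coordL p 2 y)
            * if m = 2 * k + 2 then 1 else 0) := by
  simp only [mu, LinearMap.add_apply, LinearMap.sum_apply, elem_apply, map_add, map_sum,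
    map_smul, map_neg, smul_eq_mul, coordL_X h1 h2]
  congr 1
  · ring
  · exact Finset.sum_congr rfl fun k _ => by ring

theorem coordL_mu_one (hp : 1 ≤ p) (x y : V p) :
    coordL p 1 (mu p φ x y) = -(coordL p 1 x * coordL p 2 y - coordL p 2 x * coordL p 1 y) -
      ∑ k ∈ Finset.Icc 1 (p - 1),
        (coordL p (2*k+1) x * coordL p (2*k+2) y - coordL p (2*k+2) x * coordL p (2*k+1) y) := by
  rw [coordL_mu φ le_rfl (by omega), sub_eq_add_neg _ (Finset.sum _ _), ← Finset.sum_neg_distrib]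
  congr 1
  · simp
  · refine Finset.sum_congr rfl fun k hk => ?_
    rw [Finset.mem_Icc] at hk
    simp [show k ≠ 0 by omega]

theorem coordL_mu_two (hp : 1 ≤ p) (x y : V p) : coordL p 2 (mu p φ x y) = 0 := by
  rw [coordL_mu φ (by omega) (by omega), Finset.sum_eq_zero]
  · simp
  · intro k hk
    rw [Finset.mem_Icc] at hk
    simp [show k ≠ 0 by omega, show 2 ≠ 2*k+1 by omega]

theorem coordL_mu_odd {k : ℕ} (hk1 : 1 ≤ k) (hk2 : k ≤ p - 1) (x y : V p) :
    coordL p (2*k+1) (mu p φ x y) =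
      -φ k * (coordL p 2 x * coordL p (2*k+1) y - coordL p (2*k+1) x * coordL p 2 y) := by
  rw [coordL_mu φ (by omega) (by omega), if_neg (show ¬(2*k+1 = 1) by omega),
    Finset.sum_eq_single_of_mem k (by rw [Finset.mem_Icc]; omega)]
  · rw [if_pos rfl, if_neg (show ¬(2*k+1 = 2*k+2) by omega)]
    ring
  · intro k' _ hne
    rw [if_neg (show ¬(2*k+1 = 2*k'+1) by omega), if_neg (show ¬(2*k+1 = 2*k'+2) by omega)]
    ring

theorem coordL_mu_even {k : ℕ} (hk1 : 1 ≤ k) (hk2 : k ≤ p - 1) (x y : V p) :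
    coordL p (2*k+2) (mu p φ x y) =
      (1 + φ k) * (coordL p 2 x * coordL p (2*k+2) y - coordL p (2*k+2) x * coordL p 2 y) := by
  rw [coordL_mu φ (by omega) (by omega), if_neg (show ¬(2*k+2 = 1) by omega),
    Finset.sum_eq_single_of_mem k (by rw [Finset.mem_Icc]; omega)]
  · rw [if_pos rfl, if_neg (show ¬(2*k+2 = 2*k+1) by omega)]
    ring
  · intro k' _ hne
    rw [if_neg (show ¬(2*k+2 = 2*k'+1) by omega), if_neg (show ¬(2*k+2 = 2*k'+2) by omega)]
    ring

theorem mu_swap (x y : V p) : mu p φ x y = -mu p φ y x := by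
  refine ext_coordL fun m h1 h2 => ?_
  rw [map_neg, coordL_mu φ h1 h2, coordL_mu φ h1 h2, neg_add, ← Finset.sum_neg_distrib]
  congr 1
  · ring
  · exact Finset.sum_congr rfl fun k _ => by ring

theorem mu_jacobi (hp : 1 ≤ p) (x y z : V p) :
    mu p φ x (mu p φ y z) = mu p φ (mu p φ x y) z + mu p φ y (mu p φ x z) := by
  set G : V p → V p → ℂ := fun a c => ∑ k ∈ Finset.Icc 1 (p - 1),
    ((1 + φ k) * coordL p (2*k+1) a * coordL p (2*k+2) c
      + φ k * coordL p (2*k+2) a * coordL p (2*k+1) c) with hG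
  have hω : ∀ a c, ∑ k ∈ Finset.Icc 1 (p - 1),
      (coordL p (2*k+1) a * coordL p (2*k+2) c - coordL p (2*k+2) a * coordL p (2*k+1) c) =
        G a c - G c a := fun a c => by
    rw [hG, ← Finset.sum_sub_distrib]
    exact Finset.sum_congr rfl fun k _ => by ring
  have hS : ∀ a b c, ∑ k ∈ Finset.Icc 1 (p - 1),
      (coordL p (2*k+1) a * coordL p (2*k+2) (mu p φ b c)
        - coordL p (2*k+2) a * coordL p (2*k+1) (mu p φ b c)) =
        coordL p 2 b * G a c - coordL p 2 c * G a b := fun a b c => by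
    rw [hG, Finset.mul_sum, Finset.mul_sum, ← Finset.sum_sub_distrib]
    refine Finset.sum_congr rfl fun k hk => ?_
    rw [Finset.mem_Icc] at hk
    rw [coordL_mu_odd φ hk.1 hk.2, coordL_mu_even φ hk.1 hk.2]
    ring
  -- Only the `X₁`-coordinate is not a plain ring identity: its sums are all expressed through
  -- the form `G`, whose antisymmetrisation is the symplectic part of the bracket.
  rw [mu_swap φ (mu p φ x y) z]
  refine ext_coordL fun m h1 h2 => ?_
  rcases index_cases h1 h2 with rfl | rfl | ⟨k, hk1, hk2, rfl⟩ | ⟨k, hk1, hk2, rfl⟩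
  · simp only [map_add, map_neg, coordL_mu_one φ hp, coordL_mu_two φ hp, hS]
    simp only [hω]
    ring
  · simp only [map_add, map_neg, coordL_mu_two φ hp]
    ring
  · simp only [map_add, map_neg, coordL_mu_odd φ hk1 hk2, coordL_mu_two φ hp]
    ring
  · simp only [map_add, map_neg, coordL_mu_even φ hk1 hk2, coordL_mu_two φ hp]
    ring

theorem mu_X_odd_X_even (hp : 1 ≤ p) {k : ℕ} (hk1 : 1 ≤ k) (hk2 : k ≤ p - 1) :
    mu p φ (X p (2*k+1)) (X p (2*k+2)) = -X p 1 := by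
  have hX : ∀ n, 1 ≤ n → n ≤ 2 * p → ∀ b, coordL p n (X p b) = if n = b then 1 else 0 :=
    fun _ => coordL_X
  have hX₂ := hX 2 (by omega) (by omega)
  refine ext_coordL fun m h1 h2 => ?_
  rcases index_cases h1 h2 with rfl | rfl | ⟨l, hl1, hl2, rfl⟩ | ⟨l, hl1, hl2, rfl⟩
  · rw [coordL_mu_one φ hp, Finset.sum_eq_single_of_mem k (by rw [Finset.mem_Icc]; omega)]
    · simp [show k ≠ 0 by omega, hX 1 le_rfl h2, hX₂, hX (2*k+1) (by omega) (by omega),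
        hX (2*k+2) (by omega) (by omega)]
    · intro k' hk' hne
      rw [Finset.mem_Icc] at hk'
      simp [hX (2*k'+1) (by omega) (by omega), hX (2*k'+2) (by omega) (by omega), hne,
        show 2*k' ≠ 2*k+1 by omega]
  · simp [coordL_mu_two φ hp, hX₂]
  · simp [show k ≠ 0 by omega, show l ≠ 0 by omega, coordL_mu_odd φ hl1 hl2, hX₂,
      hX (2*l+1) (by omega) (by omega)]
  · simp [show k ≠ 0 by omega, coordL_mu_even φ hl1 hl2, hX₂, hX (2*l+2) (by omega) (by omega)]

end Bracket

section AdXTwo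

variable {p : ℕ} (φ : ℕ → ℂ)

/-- The eigenvalue of `ad X_2` on the basis vector `X_m`. -/
def adWeight (m : ℕ) : ℂ :=
  if m = 1 then 1 else if m = 2 then 0 else if m % 2 = 1 then -φ (m / 2) else 1 + φ (m / 2 - 1)

theorem adWeight_one : adWeight φ 1 = 1 := if_pos rfl

theorem adWeight_two : adWeight φ 2 = 0 := by simp [adWeight]

theorem adWeight_odd {k : ℕ} (hk : 1 ≤ k) : adWeight φ (2*k+1) = -φ k := by
  rw [adWeight, if_neg (by omega), if_neg (by omega), if_pos (by omega)]
  congr 2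
  omega

theorem adWeight_even {k : ℕ} (hk : 1 ≤ k) : adWeight φ (2*k+2) = 1 + φ k := by
  rw [adWeight, if_neg (by omega), if_neg (by omega), if_neg (by omega)]
  congr 2
  omega

theorem coordL_mu_X_two (hp : 1 ≤ p) {m : ℕ} (h1 : 1 ≤ m) (h2 : m ≤ 2 * p) (v : V p) :
    coordL p m (mu p φ (X p 2) v) = adWeight φ m * coordL p m v := by
  have hX : ∀ n, 1 ≤ n → n ≤ 2 * p → ∀ b, coordL p n (X p b) = if n = b then 1 else 0 :=
    fun _ => coordL_X
  have hX₂ := hX 2 (by omega) (by omega)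
  rcases index_cases h1 h2 with rfl | rfl | ⟨k, hk1, hk2, rfl⟩ | ⟨k, hk1, hk2, rfl⟩
  · rw [coordL_mu_one φ hp, Finset.sum_eq_zero fun k hk => ?_]
    · simp [hX 1 le_rfl h2, hX₂, adWeight_one]
    · rw [Finset.mem_Icc] at hk
      simp [show k ≠ 0 by omega, hX (2*k+1) (by omega) (by omega),
        hX (2*k+2) (by omega) (by omega)]
  · simp [coordL_mu_two φ hp, adWeight_two]
  · simp [coordL_mu_odd φ hk1 hk2, adWeight_odd φ hk1, hX₂, hX (2*k+1) (by omega) (by omega)]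
  · simp [show k ≠ 0 by omega, coordL_mu_even φ hk1 hk2, adWeight_even φ hk1, hX₂,
      hX (2*k+2) (by omega) (by omega)]

theorem coordL_adWeight {m : ℕ} (h1 : 1 ≤ m) (h2 : m ≤ 2 * p) :
    coordL p m (fun t : Fin (2 * p) => adWeight φ (t + 1)) = adWeight φ m := by
  rw [coordL_apply (by omega)]
  exact congrArg _ (Nat.sub_add_cancel h1)

theorem mu_X_two_eq_diagonal (hp : 1 ≤ p) :
    mu p φ (X p 2) = toLin' (diagonal fun t : Fin (2 * p) => adWeight φ (t + 1)) := by
  refine LinearMap.ext fun v => ext_coordL fun m h1 h2 => ?_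
  rw [coordL_mu_X_two φ hp h1 h2, coordL_diagonal, coordL_adWeight φ h1 h2]

theorem mu_X_two_apply (hp : 1 ≤ p) (v : V p) (t : Fin (2 * p)) :
    mu p φ (X p 2) v t = adWeight φ (t + 1) * v t := by
  rw [mu_X_two_eq_diagonal φ hp, toLin'_diagonal_apply]

theorem adWeight_injOn (hΩ : AvoidsOmega1 p φ) {m n : ℕ} (hm1 : 1 ≤ m) (hm2 : m ≤ 2 * p)
    (hn1 : 1 ≤ n) (hn2 : n ≤ 2 * p) (h : adWeight φ m = adWeight φ n) : m = n := by
  rcases index_cases hm1 hm2 with rfl | rfl | ⟨k, hk1, hk2, rfl⟩ | ⟨k, hk1, hk2, rfl⟩ <;>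
  rcases index_cases hn1 hn2 with rfl | rfl | ⟨l, hl1, hl2, rfl⟩ | ⟨l, hl1, hl2, rfl⟩
  · rfl
  · simp [adWeight_one, adWeight_two] at h
  · rw [adWeight_one, adWeight_odd φ hl1] at h
    exact ((hΩ l l hl1 hl2 hl1 hl2).2.2.2.2.1 (by linear_combination h)).elim
  · rw [adWeight_one, adWeight_even φ hl1] at h
    exact ((hΩ l l hl1 hl2 hl1 hl2).2.2.2.1 (by linear_combination -h)).elim
  · simp [adWeight_one, adWeight_two] at h
  · rfl
  · rw [adWeight_two, adWeight_odd φ hl1] at h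
    exact ((hΩ l l hl1 hl2 hl1 hl2).2.2.2.1 (by linear_combination h)).elim
  · rw [adWeight_two, adWeight_even φ hl1] at h
    exact ((hΩ l l hl1 hl2 hl1 hl2).2.2.2.2.1 (by linear_combination -h)).elim
  · rw [adWeight_one, adWeight_odd φ hk1] at h
    exact ((hΩ k k hk1 hk2 hk1 hk2).2.2.2.2.1 (by linear_combination -h)).elim
  · rw [adWeight_two, adWeight_odd φ hk1] at h
    exact ((hΩ k k hk1 hk2 hk1 hk2).2.2.2.1 (by linear_combination -h)).elim
  · rw [adWeight_odd φ hk1, adWeight_odd φ hl1] at h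
    by_contra hne
    exact (hΩ k l hk1 hk2 hl1 hl2).2.2.1 (by omega) (by linear_combination -h)
  · rw [adWeight_odd φ hk1, adWeight_even φ hl1] at h
    exact ((hΩ k l hk1 hk2 hl1 hl2).1 (by linear_combination -h)).elim
  · rw [adWeight_one, adWeight_even φ hk1] at h
    exact ((hΩ k k hk1 hk2 hk1 hk2).2.2.2.1 (by linear_combination h)).elim
  · rw [adWeight_two, adWeight_even φ hk1] at h
    exact ((hΩ k k hk1 hk2 hk1 hk2).2.2.2.2.1 (by linear_combination h)).elim
  · rw [adWeight_even φ hk1, adWeight_odd φ hl1] at h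
    exact ((hΩ k l hk1 hk2 hl1 hl2).1 (by linear_combination h)).elim
  · rw [adWeight_even φ hk1, adWeight_even φ hl1] at h
    by_contra hne
    exact (hΩ k l hk1 hk2 hl1 hl2).2.2.1 (by omega) (by linear_combination h)

theorem adWeight_injective (hΩ : AvoidsOmega1 p φ) :
    Function.Injective fun t : Fin (2 * p) => adWeight φ (t + 1) := fun s t h =>
  Fin.ext (Nat.succ_injective (adWeight_injOn φ hΩ (by omega) (by omega) (by omega) (by omega) h))

end AdXTwo

section Derivations

variable {p : ℕ} (φ : ℕ → ℂ)

theorem mu_mem_derSub (hp : 1 ≤ p) (x : V p) : mu p φ x ∈ derSub p (mu p φ) :=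
  mu_jacobi φ hp x

theorem diagonal_mem_derSub (hp : 1 ≤ p) {δ : V p} (hδ₂ : coordL p 2 δ = 0)
    (hrel : ∀ k, 1 ≤ k → k ≤ p - 1 → coordL p (2*k+1) δ + coordL p (2*k+2) δ = coordL p 1 δ) :
    toLin' (diagonal δ) ∈ derSub p (mu p φ) := by
  intro x y
  refine ext_coordL fun m h1 h2 => ?_
  rcases index_cases h1 h2 with rfl | rfl | ⟨k, hk1, hk2, rfl⟩ | ⟨k, hk1, hk2, rfl⟩
  · have key : ∑ k ∈ Finset.Icc 1 (p - 1),
          (coordL p (2*k+1) δ * coordL p (2*k+1) x * coordL p (2*k+2) y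
            - coordL p (2*k+2) δ * coordL p (2*k+2) x * coordL p (2*k+1) y) +
        ∑ k ∈ Finset.Icc 1 (p - 1),
          (coordL p (2*k+1) x * (coordL p (2*k+2) δ * coordL p (2*k+2) y)
            - coordL p (2*k+2) x * (coordL p (2*k+1) δ * coordL p (2*k+1) y)) =
        coordL p 1 δ * ∑ k ∈ Finset.Icc 1 (p - 1),
          (coordL p (2*k+1) x * coordL p (2*k+2) y - coordL p (2*k+2) x * coordL p (2*k+1) y) := by
      rw [Finset.mul_sum, ← Finset.sum_add_distrib]
      refine Finset.sum_congr rfl fun k hk => ?_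
      rw [Finset.mem_Icc] at hk
      rw [← hrel k hk.1 hk.2]
      ring
    simp only [map_add, coordL_diagonal, coordL_mu_one φ hp, hδ₂]
    linear_combination key
  · simp only [map_add, coordL_diagonal, coordL_mu_two φ hp, hδ₂]
    ring
  · simp only [map_add, coordL_diagonal, coordL_mu_odd φ hk1 hk2, hδ₂]
    ring
  · simp only [map_add, coordL_diagonal, coordL_mu_even φ hk1 hk2, hδ₂]
    ring

theorem coordL_add_coordL_of_diagonal_mem_derSub (hp : 1 ≤ p) {δ : V p}
    (hδ : toLin' (diagonal δ) ∈ derSub p (mu p φ)) {k : ℕ} (hk1 : 1 ≤ k) (hk2 : k ≤ p - 1) :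
    coordL p (2*k+1) δ + coordL p (2*k+2) δ = coordL p 1 δ := by
  have h := hδ (X p (2*k+1)) (X p (2*k+2))
  rw [mu_X_odd_X_even φ hp hk1 hk2, toLin'_diagonal_X,
    toLin'_diagonal_X, map_neg, toLin'_diagonal_X,
    map_smul, LinearMap.smul_apply, map_smul, mu_X_odd_X_even φ hp hk1 hk2, ← add_smul] at h
  have h1 := congrArg (coordL p 1) h
  simp only [map_neg, map_smul, smul_eq_mul, coordL_X le_rfl (by omega : 1 ≤ 2 * p), if_true]
    at h1
  linear_combination h1

theorem fDer_eq_diagonal (i : ℕ) :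
    fDer p i = toLin' (diagonal (X p (2*i+1) - X p (2*i+2))) := by
  refine LinearMap.ext fun v => ext_coordL fun m h1 h2 => ?_
  simp only [fDer, LinearMap.sub_apply, LinearMap.smulRight_apply, map_sub, map_smul,
    smul_eq_mul, coordL_diagonal, coordL_X h1 h2]
  by_cases h : m = 2*i+1
  · simp [h]
  · by_cases h' : m = 2*i+2 <;> simp [h, h']

theorem fDer_mem_derSub (hp : 1 ≤ p) {i : ℕ} (hi : 1 ≤ i) : fDer p i ∈ derSub p (mu p φ) := by
  rw [fDer_eq_diagonal]
  refine diagonal_mem_derSub φ hp ?_ fun k hk1 hk2 => ?_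
  · simp [coordL_X (by omega : 1 ≤ 2) (by omega : 2 ≤ 2 * p), show i ≠ 0 by omega,
      show 2 ≠ 2*i+1 by omega]
  · simp only [map_sub, coordL_X (by omega : 1 ≤ 2*k+1) (by omega : 2*k+1 ≤ 2 * p),
      coordL_X (by omega : 1 ≤ 2*k+2) (by omega : 2*k+2 ≤ 2 * p),
      coordL_X le_rfl (by omega : 1 ≤ 2 * p)]
    by_cases hki : k = i
    · simp [hki, show i ≠ 0 by omega]
    · simp [hki, show i ≠ 0 by omega, show 2*k ≠ 2*i+1 by omega, show 2*k+1 ≠ 2*i by omega]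

def fDerWeight (μ : Fin (p - 1) → ℂ) : V p :=
  ∑ i, μ i • (X p (2 * ((i : ℕ) + 1) + 1) - X p (2 * ((i : ℕ) + 1) + 2))

theorem sum_smul_fDer_eq_diagonal (μ : Fin (p - 1) → ℂ) :
    ∑ i, μ i • fDer p ((i : ℕ) + 1) = toLin' (diagonal (fDerWeight μ)) := by
  refine LinearMap.ext fun v => funext fun t => ?_
  simp only [fDerWeight, fDer_eq_diagonal, LinearMap.sum_apply, Finset.sum_apply,
    LinearMap.smul_apply, Pi.smul_apply, toLin'_diagonal_apply, smul_eq_mul, Finset.sum_mul,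
    mul_assoc]

theorem coordL_fDerWeight_of_le_two (hp : 1 ≤ p) (μ : Fin (p - 1) → ℂ) {m : ℕ} (h1 : 1 ≤ m)
    (h2 : m ≤ 2) : coordL p m (fDerWeight μ) = 0 := by
  simp only [fDerWeight, map_sum, map_smul, map_sub, smul_eq_mul,
    coordL_X h1 (by omega : m ≤ 2 * p)]
  refine Finset.sum_eq_zero fun i _ => ?_
  rw [if_neg (by omega), if_neg (by omega)]
  ring

theorem coordL_fDerWeight_odd (μ : Fin (p - 1) → ℂ) {k : ℕ} (hk1 : 1 ≤ k) (hk2 : k ≤ p - 1) :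
    coordL p (2*k+1) (fDerWeight μ) = μ ⟨k - 1, by omega⟩ := by
  simp only [fDerWeight, map_sum, map_smul, map_sub, smul_eq_mul,
    coordL_X (p := p) (m := 2*k+1) (by omega) (by omega)]
  rw [Finset.sum_eq_single ⟨k - 1, by omega⟩]
  · rw [if_pos (by simp only; omega), if_neg (by simp only; omega)]
    ring
  · intro i _ hne
    have : (i : ℕ) ≠ k - 1 := fun h => hne (Fin.ext h)
    rw [if_neg (by omega), if_neg (by omega)]
    ring
  · simp

theorem coordL_fDerWeight_even (μ : Fin (p - 1) → ℂ) {k : ℕ} (hk1 : 1 ≤ k) (hk2 : k ≤ p - 1) :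
    coordL p (2*k+2) (fDerWeight μ) = -μ ⟨k - 1, by omega⟩ := by
  simp only [fDerWeight, map_sum, map_smul, map_sub, smul_eq_mul,
    coordL_X (p := p) (m := 2*k+2) (by omega) (by omega)]
  rw [Finset.sum_eq_single ⟨k - 1, by omega⟩]
  · rw [if_neg (by simp only; omega), if_pos (by simp only; omega)]
    ring
  · intro i _ hne
    have : (i : ℕ) ≠ k - 1 := fun h => hne (Fin.ext h)
    rw [if_neg (by omega), if_neg (by omega)]
    ring
  · simp

theorem diagonal_eq_smul_mu_add_sum_smul_fDer (hp : 1 ≤ p) {δ : V p} (hδ₂ : coordL p 2 δ = 0)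
    (hrel : ∀ k, 1 ≤ k → k ≤ p - 1 → coordL p (2*k+1) δ + coordL p (2*k+2) δ = coordL p 1 δ) :
    toLin' (diagonal δ) = coordL p 1 δ • mu p φ (X p 2) +
      ∑ i : Fin (p - 1), (coordL p (2 * ((i : ℕ) + 1) + 1) δ + coordL p 1 δ * φ ((i : ℕ) + 1)) •
        fDer p ((i : ℕ) + 1) := by
  rw [sum_smul_fDer_eq_diagonal, mu_X_two_eq_diagonal φ hp]
  refine LinearMap.ext fun v => ext_coordL fun m h1 h2 => ?_
  simp only [LinearMap.add_apply, LinearMap.smul_apply, map_add, map_smul, smul_eq_mul,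
    coordL_diagonal, coordL_adWeight φ h1 h2]
  rcases index_cases h1 h2 with rfl | rfl | ⟨k, hk1, hk2, rfl⟩ | ⟨k, hk1, hk2, rfl⟩
  · rw [coordL_fDerWeight_of_le_two hp _ le_rfl (by omega), adWeight_one]
    ring
  · rw [hδ₂, coordL_fDerWeight_of_le_two hp _ (by omega) le_rfl, adWeight_two]
    ring
  · rw [coordL_fDerWeight_odd _ hk1 hk2, adWeight_odd φ hk1]
    simp only [Nat.sub_add_cancel hk1]
    ring
  · rw [coordL_fDerWeight_even _ hk1 hk2, adWeight_even φ hk1]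
    simp only [Nat.sub_add_cancel hk1]
    linear_combination coordL p (2*k+2) v * hrel k hk1 hk2

theorem exists_eq_mu_add_sum_smul_fDer (hp : 1 ≤ p) (hΩ : AvoidsOmega1 p φ)
    {D : V p →ₗ[ℂ] V p} (hD : D ∈ derSub p (mu p φ)) :
    ∃ (x : V p) (μ : Fin (p - 1) → ℂ), D = mu p φ x + ∑ i, μ i • fDer p ((i : ℕ) + 1) := by
  have hX₂ : X p 2 = Pi.single (⟨1, by omega⟩ : Fin (2 * p)) 1 :=
    X_eq_single (by omega) (by omega)
  obtain ⟨x, δ, hδ, hDx⟩ := exists_eq_ad_add_diagonal (mu p φ) (mu_swap φ) (mu_jacobi φ hp)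
    (i₀ := ⟨1, by omega⟩) (j₁ := ⟨0, by omega⟩) (by rw [← hX₂]; exact mu_X_two_apply φ hp)
    (adWeight_injective φ hΩ) (adWeight_two φ) (by simp [adWeight_one]) D hD
  have hδ₂ : coordL p 2 δ = 0 := by rw [coordL_apply (by omega)]; exact hδ
  have hδD : toLin' (diagonal δ) ∈ derSub p (mu p φ) := by
    simpa [hDx] using sub_mem hD (mu_mem_derSub φ hp x)
  refine ⟨x + coordL p 1 δ • X p 2,
    fun i => coordL p (2 * ((i : ℕ) + 1) + 1) δ + coordL p 1 δ * φ ((i : ℕ) + 1), ?_⟩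
  rw [hDx, diagonal_eq_smul_mu_add_sum_smul_fDer φ hp hδ₂
    fun k hk1 hk2 => coordL_add_coordL_of_diagonal_mem_derSub φ hp hδD hk1 hk2,
    map_add, map_smul, add_assoc]

theorem eq_zero_of_mu_add_sum_smul_fDer_eq_zero (hp : 1 ≤ p) (hΩ : AvoidsOmega1 p φ)
    {x : V p} {μ : Fin (p - 1) → ℂ} (h : mu p φ x + ∑ i, μ i • fDer p ((i : ℕ) + 1) = 0) :
    x = 0 ∧ μ = 0 := by
  rw [sum_smul_fDer_eq_diagonal] at h
  have hX₂ : X p 2 = Pi.single (⟨1, by omega⟩ : Fin (2 * p)) 1 :=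
    X_eq_single (by omega) (by omega)
  have hx : x = x ⟨1, by omega⟩ • X p 2 := by
    have h2 := LinearMap.congr_fun h (X p 2)
    rw [LinearMap.add_apply, toLin'_diagonal_X,
      coordL_fDerWeight_of_le_two hp μ (by omega) le_rfl, zero_smul, add_zero, mu_swap,
      LinearMap.zero_apply, neg_eq_zero] at h2
    rw [hX₂, ← Pi.single_smul', smul_eq_mul, mul_one]
    refine eq_single_of_apply_eq_smul (mu_X_two_apply φ hp) (adWeight_injective φ hΩ) ?_
    rw [h2, adWeight_two, zero_smul]
  set a := x ⟨1, by omega⟩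
  have hcoord : ∀ m, 1 ≤ m → m ≤ 2 * p → a * adWeight φ m + coordL p m (fDerWeight μ) = 0 :=
    fun m h1 h2 => by
      have hm := congrArg (coordL p m) (LinearMap.congr_fun h (X p m))
      rw [LinearMap.add_apply, hx, map_smul, LinearMap.smul_apply, mu_X_two_eq_diagonal φ hp,
        toLin'_diagonal_X, toLin'_diagonal_X, coordL_adWeight φ h1 h2,
        LinearMap.zero_apply, map_zero, smul_smul, ← add_smul, map_smul, coordL_X h1 h2,
        if_pos rfl, smul_eq_mul, mul_one] at hm
      exact hm
  have ha : a = 0 := by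
    simpa [adWeight_one, coordL_fDerWeight_of_le_two hp μ le_rfl (by omega)] using
      hcoord 1 le_rfl (by omega)
  refine ⟨by rw [hx, ha, zero_smul], funext fun i => ?_⟩
  have := hcoord (2 * ((i : ℕ) + 1) + 1) (by omega) (by omega)
  rwa [ha, zero_mul, zero_add, coordL_fDerWeight_odd μ (by omega) (by omega)] at this

theorem mu_add_sum_smul_fDer_injective (hp : 1 ≤ p) (hΩ : AvoidsOmega1 p φ)
    {x y : V p} {μ ν : Fin (p - 1) → ℂ}
    (h : mu p φ x + ∑ i, μ i • fDer p ((i : ℕ) + 1) =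
      mu p φ y + ∑ i, ν i • fDer p ((i : ℕ) + 1)) : x = y ∧ μ = ν := by
  have h₀ := sub_eq_zero.mpr h
  rw [add_sub_add_comm, ← map_sub, ← Finset.sum_sub_distrib] at h₀
  obtain ⟨hxy, hμν⟩ := eq_zero_of_mu_add_sum_smul_fDer_eq_zero φ hp hΩ (μ := μ - ν) (by
    rw [← h₀]
    exact congrArg _ (Finset.sum_congr rfl fun i _ => sub_smul (μ i) (ν i) (fDer p (i + 1))))
  exact ⟨sub_eq_zero.mp hxy, sub_eq_zero.mp hμν⟩

end Derivations

/-- if `φ` avoids `Ω₁` then each `f_i` (`1 ≤ i ≤ p−1`) is a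
derivation of `F_φ`, and every derivation `D` of `F_φ` is uniquely
`D = ad(x) + λ_1 f_1 + … + λ_{p−1} f_{p−1}` (note `ad(x) = mu p φ x`). -/
theorem stmt4 (p : ℕ) (hp : 2 ≤ p) (φ : ℕ → ℂ) (hΩ : AvoidsOmega1 p φ) :
    (∀ i : ℕ, 1 ≤ i → i ≤ p - 1 → fDer p i ∈ derSub p (mu p φ)) ∧
    (∀ D ∈ derSub p (mu p φ), ∃! c : V p × (Fin (p-1) → ℂ),
      D = mu p φ c.1 + ∑ i : Fin (p-1), c.2 i • fDer p ((i : ℕ) + 1)) := by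
  refine ⟨fun i hi _ => fDer_mem_derSub φ (by omega) hi, fun D hD => ?_⟩
  obtain ⟨x, μ, rfl⟩ := exists_eq_mu_add_sum_smul_fDer φ (by omega) hΩ hD
  refine ⟨(x, μ), rfl, fun c hc => ?_⟩
  obtain ⟨hx, hμ⟩ := mu_add_sum_smul_fDer_injective φ (by omega) hΩ hc.symm
  exact Prod.ext hx hμ
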